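/- Let f : ℝ → ℂ be a continuously differentiable 2π-periodic function with zero mean, and suppose e^{f} extends to the boundary value of a nonvanishing holomorphic function on the unit disk (i.e., there exists F holomorphic and nonvanishing on the closed unit disk with F(e^{iθ}) = e^{f(θ)}). Then f itself differs from the boundary value of a holomorphic function on the disk by a constant in 2πi ℤ; equivalently, the winding-type periods of f are integers. -/

import Mathlib

/-!
Since the closed disk is convex, hence simply connected, and `exp : ℂ → ℂ \ {0}` is a covering
map, the nonvanishing `F` has a continuous logarithm `G` on the closed disk; `G` is holomorphic
inside because it is locally a branch of `log ∘ F` plus a constant. On the circle, `f` and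
`G ∘ exp(i ·)` are two continuous logarithms of the same function, so their difference is a
continuous function with values in the discrete set `2πiℤ`, hence constant.
-/

open Complex Metric Topology

theorem Convex.exists_continuousOn_exp_eq {E : Type*} [NormedAddCommGroup E] [NormedSpace ℝ E]
    {S : Set E} (hS : Convex ℝ S) {F : E → ℂ} (hF : ContinuousOn F S) (hF0 : ∀ z ∈ S, F z ≠ 0) :
    ∃ G : E → ℂ, ContinuousOn G S ∧ ∀ z ∈ S, exp (G z) = F z := by
  rcases S.eq_empty_or_nonempty with rfl | ⟨z₀, hz₀⟩
  · exact ⟨0, by simp⟩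
  have := hS.contractibleSpace ⟨z₀, hz₀⟩
  have := hS.locallyPathConnectedSpace
  obtain ⟨L, ⟨-, hL⟩, -⟩ := isCoveringMapOn_exp.existsUnique_continuousMap_lifts
    ⟨S.domRestrict F, hF.domRestrict⟩ (a₀ := ⟨z₀, hz₀⟩) (e₀ := log (F z₀))
    (exp_log (hF0 z₀ hz₀)) (fun z => hF0 z z.2)
  have hext : ∀ z : S, Function.extend Subtype.val L 0 z = L z :=
    Subtype.val_injective.extend_apply _ _
  refine ⟨Function.extend Subtype.val L 0, ?_, fun z hz => ?_⟩
  · rw [continuousOn_iff_continuous_domRestrict]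
    convert L.continuous using 1
    exact funext hext
  · rw [hext ⟨z, hz⟩]
    exact congrFun hL ⟨z, hz⟩

theorem DifferentiableAt.of_cexp_eventuallyEq {E : Type*} [NormedAddCommGroup E]
    [NormedSpace ℂ E] {G F : E → ℂ} {z : E} (hG : ContinuousAt G z)
    (hF : DifferentiableAt ℂ F z) (hexp : ∀ᶠ w in 𝓝 z, Complex.exp (G w) = F w) :
    DifferentiableAt ℂ G z := by
  have hFz : F z ≠ 0 := hexp.self_of_nhds ▸ exp_ne_zero _
  have hnear : ∀ᶠ w in 𝓝 z, ‖G w - G z‖ < Real.pi :=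
    ((hG.sub continuousAt_const).norm).eventually_lt continuousAt_const (by simpa using Real.pi_pos)
  have hlog : (fun w => G z + Complex.log (F w / F z)) =ᶠ[𝓝 z] G := by
    filter_upwards [hnear, hexp] with w hw hexpw
    obtain ⟨him_lo, him_hi⟩ := abs_lt.mp ((abs_im_le_norm (G w - G z)).trans_lt hw)
    rw [← hexpw, ← hexp.self_of_nhds, ← exp_sub, log_exp him_lo him_hi.le]
    ring
  refine hlog.differentiableAt_iff.mp ?_
  simp_rw [div_eq_mul_inv]
  refine (differentiableAt_const _).add ((hF.mul_const _).clog ?_)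
  simp [mul_inv_cancel₀ hFz]

theorem Complex.isDiscrete_setOf_exp_eq_one : IsDiscrete {z : ℂ | exp z = 1} := by
  have hset : {z : ℂ | exp z = 1} = AddSubgroup.zmultiples (2 * Real.pi * I) := by
    ext z
    simp [exp_eq_one_iff, AddSubgroup.mem_zmultiples_iff, eq_comm]
  rw [hset]
  exact SetLike.isDiscrete_iff_discreteTopology.mpr inferInstance

theorem IsPreconnected.exists_int_of_exp_eq {X : Type*} [TopologicalSpace X] {S : Set X}
    (hS : IsPreconnected S) {u v : X → ℂ} (hu : ContinuousOn u S) (hv : ContinuousOn v S)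
    (h : ∀ x ∈ S, exp (u x) = exp (v x)) :
    ∃ k : ℤ, ∀ x ∈ S, u x = v x + 2 * Real.pi * I * k := by
  rcases S.eq_empty_or_nonempty with rfl | ⟨x₀, hx₀⟩
  · exact ⟨0, by simp⟩
  have hmaps : Set.MapsTo (u - v) S {z | exp z = 1} := fun x hx => by
    simp [exp_sub, h x hx]
  obtain ⟨k, hk⟩ := exp_eq_one_iff.mp (hmaps hx₀)
  refine ⟨k, fun x hx => ?_⟩
  have := hS.constant_of_mapsTo isDiscrete_setOf_exp_eq_one (hu.sub hv) hmaps hx hx₀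
  simp only [Pi.sub_apply] at this hk
  linear_combination this + hk

theorem stmt15_general (f : ℝ → ℂ) (hf : ContDiff ℝ 1 f)
    (F : ℂ → ℂ)
    (hFhol : DifferentiableOn ℂ F (ball (0 : ℂ) 1))
    (hFcont : ContinuousOn F (closedBall (0 : ℂ) 1))
    (hFne : ∀ z ∈ closedBall (0 : ℂ) 1, F z ≠ 0)
    (hbd : ∀ θ : ℝ, F (Complex.exp (θ * Complex.I)) = Complex.exp (f θ)) :
    ∃ G : ℂ → ℂ, DifferentiableOn ℂ G (ball (0 : ℂ) 1) ∧
      ContinuousOn G (closedBall (0 : ℂ) 1) ∧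
      ∃ k : ℤ, ∀ θ : ℝ,
        f θ = G (Complex.exp (θ * Complex.I)) + 2 * Real.pi * Complex.I * k := by
  obtain ⟨G, hGcont, hexpG⟩ := (convex_closedBall (0 : ℂ) 1).exists_continuousOn_exp_eq hFcont hFne
  have hGhol : DifferentiableOn ℂ G (ball 0 1) := fun z hz =>
    have hz' : ball (0 : ℂ) 1 ∈ 𝓝 z := isOpen_ball.mem_nhds hz
    DifferentiableAt.differentiableWithinAt <| .of_cexp_eventuallyEq
      (hGcont.continuousAt (Filter.mem_of_superset hz' ball_subset_closedBall))
      (hFhol.differentiableAt hz')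
      (Filter.mem_of_superset hz' fun w hw => hexpG w (ball_subset_closedBall hw))
  have hcircle : ∀ θ : ℝ, Complex.exp (θ * Complex.I) ∈ closedBall (0 : ℂ) 1 := fun θ => by
    simp [norm_exp_ofReal_mul_I]
  obtain ⟨k, hk⟩ := isPreconnected_univ.exists_int_of_exp_eq hf.continuous.continuousOn
    (hGcont.comp_continuous (by fun_prop) hcircle).continuousOn
    fun θ _ => (hbd θ).symm.trans (hexpG _ (hcircle θ)).symm
  exact ⟨G, hGhol, hGcont, k, fun θ => hk θ (Set.mem_univ θ)⟩

/-- If `f` is a `C¹` `2π`-periodic zero-mean function on the circle such that `e^f` is the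
boundary value of a nonvanishing holomorphic function on the disk, then `f` itself differs
from the boundary value of a holomorphic function on the disk by a constant in `2πiℤ`. -/
theorem stmt15 (f : ℝ → ℂ) (hf : ContDiff ℝ 1 f)
    (hper : ∀ θ : ℝ, f (θ + 2 * Real.pi) = f θ)
    (hmean : ∫ θ in (0 : ℝ)..(2 * Real.pi), f θ = 0)
    (F : ℂ → ℂ)
    (hFhol : DifferentiableOn ℂ F (ball (0 : ℂ) 1))
    (hFcont : ContinuousOn F (closedBall (0 : ℂ) 1))
    (hFne : ∀ z ∈ closedBall (0 : ℂ) 1, F z ≠ 0)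
    (hbd : ∀ θ : ℝ, F (Complex.exp (θ * Complex.I)) = Complex.exp (f θ)) :
    ∃ G : ℂ → ℂ, DifferentiableOn ℂ G (ball (0 : ℂ) 1) ∧
      ContinuousOn G (closedBall (0 : ℂ) 1) ∧
      ∃ k : ℤ, ∀ θ : ℝ,
        f θ = G (Complex.exp (θ * Complex.I)) + 2 * Real.pi * Complex.I * k :=
  stmt15_general f hf F hFhol hFcont hFne hbd
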